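/- For the Paley Hadamard basis H of size 2^r and Haar scaling matrix W⁰ of size 2^r, the local coherence of row j of H^* W⁰ restricted to level ℓ columns is μ_j(H^* W⁰ P_{𝒯_ℓ}^T) = 2^{−(ℓ−1)/2} if ⌊log₂(j−1)⌋ ≤ ℓ−2, and 0 otherwise. -/

import Mathlib

/-- Paley-ordered Hadamard basis `H_{2^r}`, given entrywise:
`Had r i j` is the `(i,j)` entry (0-based) of the `2^r × 2^r` matrix defined by
`H_1 = [1]`, `H_{2N} = (1/√2)[H_N ⊗ (1,1)ᵀ, H_N ⊗ (1,-1)ᵀ]`. -/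
noncomputable def Had : ℕ → ℕ → ℕ → ℝ
  | 0, _, _ => 1
  | r + 1, i, j =>
    if j < 2 ^ r then (Real.sqrt 2)⁻¹ * Had r (i / 2) j
    else (if i % 2 = 0 then (1 : ℝ) else -1) * ((Real.sqrt 2)⁻¹ * Had r (i / 2) (j - 2 ^ r))

/-- 1D discrete Haar wavelet basis `W_{2^r}`, entrywise:
`W_1 = [1]`, `W_{2N} = (1/√2)[W_N ⊗ (1,1)ᵀ, I_N ⊗ (1,-1)ᵀ]`. -/
noncomputable def HaarW : ℕ → ℕ → ℕ → ℝ
  | 0, _, _ => 1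
  | r + 1, i, j =>
    if j < 2 ^ r then (Real.sqrt 2)⁻¹ * HaarW r (i / 2) j
    else (Real.sqrt 2)⁻¹ * (if i / 2 = j - 2 ^ r then (if i % 2 = 0 then (1 : ℝ) else -1) else 0)

/-- Haar scaling matrix `W⁰_{2^r}`, entrywise:
`W⁰_1 = [1]`, `W⁰_{2N} = (1/√2)[W⁰_N ⊗ (1,1)ᵀ, I_N ⊗ (1,1)ᵀ]`. -/
noncomputable def HaarW0 : ℕ → ℕ → ℕ → ℝ
  | 0, _, _ => 1
  | r + 1, i, j =>
    if j < 2 ^ r then (Real.sqrt 2)⁻¹ * HaarW0 r (i / 2) j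
    else (Real.sqrt 2)⁻¹ * (if i / 2 = j - 2 ^ r then (1 : ℝ) else 0)

/-!
Rows `2a` and `2a + 1` of `W⁰_{2N}` coincide, while the same rows of `H_{2N}` sum to `√2` times
row `a` of `H_N` in the first `N` columns and cancel in the last `N`. Hence row `j` of
`H_{2N}^* W⁰_{2N}` vanishes for `j ≥ N` and otherwise equals row `j` of `H_N^* [W⁰_N, I_N]`.
Going down to size `2^ℓ` this way, a level-`ℓ` column `k` of `W⁰` picks out the single entry
`(H_{2^{ℓ-1}})_{k - 2^{ℓ-1}, j - 1}`, of modulus `2^{-(ℓ-1)/2}`, when `j - 1 < 2^{ℓ-1}`.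
-/

open Finset

theorem Finset.sum_range_two_mul {M : Type*} [AddCommMonoid M] (f : ℕ → M) (n : ℕ) :
    ∑ m ∈ range (2 * n), f m = ∑ a ∈ range n, (f (2 * a) + f (2 * a + 1)) := by
  induction n with
  | zero => simp
  | succ n ih =>
    rw [Nat.mul_succ, sum_range_succ, sum_range_succ, ih, sum_range_succ, add_assoc]

lemma abs_Had (r m j : ℕ) : |Had r m j| = (√2)⁻¹ ^ r := by
  induction r generalizing m j with
  | zero => simp [Had]
  | succ r ih =>
    rw [Had, pow_succ']
    split_ifs <;> simp [abs_mul, ih]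

lemma Had_succ_two_mul_add (r a j : ℕ) :
    Had (r + 1) (2 * a) j + Had (r + 1) (2 * a + 1) j =
      if j < 2 ^ r then √2 * Had r a j else 0 := by
  have h2 : (2 : ℝ) * (√2)⁻¹ = √2 := by rw [← div_eq_mul_inv, Real.div_sqrt]
  have hdiv : (2 * a + 1) / 2 = a := by omega
  have hmod : (2 * a + 1) % 2 = 1 := by omega
  by_cases hj : j < 2 ^ r
  · simp only [Had, hj, if_true, Nat.mul_div_cancel_left a two_pos, hdiv]
    linear_combination Had r a j * h2
  · simp only [Had, hj, if_false, Nat.mul_div_cancel_left a two_pos, hdiv, Nat.mul_mod_right, hmod]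
    norm_num

lemma HaarW0_succ_two_mul_add_one (r a k : ℕ) :
    HaarW0 (r + 1) (2 * a + 1) k = HaarW0 (r + 1) (2 * a) k := by
  have hdiv : (2 * a + 1) / 2 = a := by omega
  simp only [HaarW0, Nat.mul_div_cancel_left a two_pos, hdiv]

/-- The `(j, k)` entry (0-based) of `H_{2^r}^* W⁰_{2^r}`. -/
noncomputable def hadHaarW0 (r j k : ℕ) : ℝ := ∑ m ∈ range (2 ^ r), Had r m j * HaarW0 r m k

lemma hadHaarW0_succ (r j k : ℕ) :
    hadHaarW0 (r + 1) j k =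
      if j < 2 ^ r then ∑ a ∈ range (2 ^ r), Had r a j * (√2 * HaarW0 (r + 1) (2 * a) k)
      else 0 := by
  rw [hadHaarW0, pow_succ', sum_range_two_mul]
  simp_rw [HaarW0_succ_two_mul_add_one, ← add_mul, Had_succ_two_mul_add]
  split_ifs
  · simp only [mul_assoc, mul_left_comm (√2)]
  · simp

lemma hadHaarW0_succ_of_lt {r k : ℕ} (j : ℕ) (hk : k < 2 ^ r) :
    hadHaarW0 (r + 1) j k = if j < 2 ^ r then hadHaarW0 r j k else 0 := by
  rw [hadHaarW0_succ]
  simp only [HaarW0, if_pos hk, Nat.mul_div_cancel_left _ two_pos,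
    mul_inv_cancel_left₀ (Real.sqrt_ne_zero'.mpr two_pos), hadHaarW0]

lemma hadHaarW0_succ_of_le {r k : ℕ} (j : ℕ) (hk : 2 ^ r ≤ k) (hk' : k < 2 ^ (r + 1)) :
    hadHaarW0 (r + 1) j k = if j < 2 ^ r then Had r (k - 2 ^ r) j else 0 := by
  rw [hadHaarW0_succ]
  simp only [HaarW0, if_neg (not_lt.mpr hk), Nat.mul_div_cancel_left _ two_pos,
    mul_ite, mul_one, mul_zero]
  have hmem : k - 2 ^ r ∈ range (2 ^ r) := by rw [mem_range, pow_succ] at *; omega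
  rw [sum_ite_eq', if_pos hmem, mul_inv_cancel₀ (Real.sqrt_ne_zero'.mpr two_pos), mul_one]

lemma abs_hadHaarW0_of_mem_level {t r k : ℕ} (j : ℕ) (htr : t < r) (hk : 2 ^ t ≤ k)
    (hk' : k < 2 ^ (t + 1)) : |hadHaarW0 r j k| = if j < 2 ^ t then (√2)⁻¹ ^ t else 0 := by
  induction r, htr using Nat.le_induction with
  | base =>
    rw [hadHaarW0_succ_of_le j hk hk', apply_ite abs, abs_Had, abs_zero]
  | succ r htr ih =>
    have hkr : k < 2 ^ r := hk'.trans_le (Nat.pow_le_pow_right two_pos htr)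
    rw [hadHaarW0_succ_of_lt j hkr]
    by_cases hjr : j < 2 ^ r
    · rw [if_pos hjr, ih]
    · have hjt : ¬ j < 2 ^ t := fun hjt =>
        hjr (hjt.trans_le (Nat.pow_le_pow_right two_pos (by omega)))
      rw [if_neg hjr, if_neg hjt, abs_zero]

/-- Local coherence of row `j` (1-based) of `H_{2^r}^* W⁰_{2^r}` restricted to the columns
of the `ℓ`-th dyadic level: it equals `2^{-(ℓ-1)/2}` if `⌊log₂(j-1)⌋ ≤ ℓ - 2` (with the
convention `⌊log₂ 0⌋ = -∞`, i.e. `j = 1` is always included) and `0` otherwise. -/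
theorem stmt_6 (r ℓ j : ℕ) (hl1 : 1 ≤ ℓ) (hlr : ℓ ≤ r) (hj1 : 1 ≤ j) :
    (Finset.Ico (2 ^ (ℓ - 1)) (2 ^ ℓ)).sup'
      (Finset.nonempty_Ico.mpr (Nat.pow_lt_pow_right one_lt_two (by omega)))
      (fun k => |∑ m ∈ Finset.range (2 ^ r), Had r m (j - 1) * HaarW0 r m k|) =
    if j = 1 ∨ (2 ≤ j ∧ (Nat.log 2 (j - 1) : ℤ) ≤ (ℓ : ℤ) - 2) then
      (Real.sqrt 2 ^ (ℓ - 1))⁻¹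
    else 0 := by
  have hcond :
      j - 1 < 2 ^ (ℓ - 1) ↔ j = 1 ∨ (2 ≤ j ∧ (Nat.log 2 (j - 1) : ℤ) ≤ (ℓ : ℤ) - 2) := by
    rcases hj1.eq_or_lt with rfl | hj2
    · simp
    · rw [← Nat.log_lt_iff_lt_pow one_lt_two (by omega)]
      omega
  have hlevel : ∀ k ∈ Ico (2 ^ (ℓ - 1)) (2 ^ ℓ),
      |hadHaarW0 r (j - 1) k| = if j - 1 < 2 ^ (ℓ - 1) then (√2)⁻¹ ^ (ℓ - 1) else 0 :=
    fun k hk => abs_hadHaarW0_of_mem_level (j - 1) (by omega) (mem_Ico.1 hk).1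
      ((mem_Ico.1 hk).2.trans_eq (by congr 1; omega))
  change (Ico _ _).sup' _ (fun k => |hadHaarW0 r (j - 1) k|) = _
  rw [sup'_congr _ rfl hlevel, sup'_const, ← inv_pow]
  exact if_congr hcond rfl rfl
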